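/- There exist ε, δ > 0 and a holomorphic function s : {v ∈ ℂ : |v| < ε} → ℂ with s(0) = 0 and |s(v)| < δ for all |v| < ε, such that for all v, σ ∈ ℂ with |v| < ε and |σ| < δ: z₀ is an eigenvalue of N₀ + vW + σW₀ if and only if σ = s(v). In other words, the intersection of the affine plane N₀ + ℂW + ℂW₀ with a sufficiently small neighbourhood of N₀ in the resonance set {N : z₀ is an eigenvalue of N} consists of exactly one simple complex-analytic curve, namely the graph of s. -/

import Mathlib

/-!
Write `S = N₀ - z₀`, `P = ⟪χ, ·⟫ χ` and `Q = 1 - P`. Integrating `(ζ - z₀)⁻¹ (N₀ - ζ)⁻¹` over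
the circle gives a reduced resolvent `D` with `S D = D S = 1 - E` and `D χ = 0`; as the range of
`E` is `ℂχ`, `Q E = 0`, and `QSQ + P` is invertible with inverse `QDQ + P`. By openness of the
units, `Q (S + vW) Q + P` stays invertible for small `v`, and then a Schur complement reduction
along `ℂχ ⊕ χ^⊥` turns `(S + vW + σP) φ = 0`, `φ ≠ 0`, into the scalar equation
`σ = -⟪χ, B (χ - (QBQ + P)⁻¹ Q B χ)⟫` with `B = S + vW`, whose right-hand side is holomorphic
in `v`.
-/

open Complex MeasureTheory ContinuousLinearMap
open scoped InnerProductSpace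

/-- The Riesz projection `E = -(2πi)⁻¹ ∮_{|ζ-z₀|=ρ₀} (N₀ - ζ)⁻¹ dζ`, expressed via a
given resolvent function `Res`. -/
noncomputable def rieszE {H : Type*} [NormedAddCommGroup H] [NormedSpace ℂ H]
    (Res : ℂ → (H →L[ℂ] H)) (z₀ : ℂ) (ρ₀ : ℝ) : H →L[ℂ] H :=
  -((2 * (Real.pi : ℂ) * Complex.I)⁻¹ • ∮ ζ in C(z₀, ρ₀), Res ζ)

open Real Metric

theorem ContinuousLinearMap.circleIntegral_comp_comm {E F : Type*} [NormedAddCommGroup E]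
    [NormedSpace ℂ E] [CompleteSpace E] [NormedAddCommGroup F] [NormedSpace ℂ F]
    [CompleteSpace F] (L : E →L[ℂ] F) {f : ℂ → E} {c : ℂ} {R : ℝ}
    (hf : CircleIntegrable f c R) :
    (∮ ζ in C(c, R), L (f ζ)) = L (∮ ζ in C(c, R), f ζ) := by
  simp only [circleIntegral, ← L.intervalIntegral_comp_comm hf.out, L.map_smul]

theorem continuousOn_sub_inv_sphere {c : ℂ} {R : ℝ} (hR : R ≠ 0) :
    ContinuousOn (fun ζ : ℂ => (ζ - c)⁻¹) (sphere c R) :=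
  (continuousOn_id.sub continuousOn_const).inv₀ fun _ hζ => sub_ne_zero.2 (ne_of_mem_sphere hζ hR)

theorem isUnit_mul_mul_add_of_isIdempotentElem {R : Type*} [Ring R] {p s d : R}
    (hp : IsIdempotentElem p) (hsp : s * p = 0) (hdp : d * p = 0)
    (hsd : (1 - p) * (s * d) = 1 - p) (hds : (1 - p) * (d * s) = 1 - p) :
    IsUnit ((1 - p) * s * (1 - p) + p) := by
  have hpq : p * (1 - p) = 0 := by rw [mul_sub, mul_one, hp.eq, sub_self]
  have hsq : s * (1 - p) = s := by rw [mul_sub, mul_one, hsp, sub_zero]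
  have hdq : d * (1 - p) = d := by rw [mul_sub, mul_one, hdp, sub_zero]
  rw [mul_assoc, hsq]
  refine ⟨⟨_, (1 - p) * d + p, ?_, ?_⟩, rfl⟩
  · calc ((1 - p) * s + p) * ((1 - p) * d + p)
        = (1 - p) * (s * (1 - p) * d) + (1 - p) * (s * p) + p * (1 - p) * d + p * p := by
          noncomm_ring
      _ = 1 := by rw [hsq, hsd, hsp, hpq, hp.eq]; noncomm_ring
  · calc ((1 - p) * d + p) * ((1 - p) * s + p)
        = (1 - p) * (d * (1 - p) * s) + (1 - p) * (d * p) + p * (1 - p) * s + p * p := by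
          noncomm_ring
      _ = 1 := by rw [hdq, hds, hdp, hpq, hp.eq]; noncomm_ring

section ReducedResolvent

variable {X : Type*} [NormedAddCommGroup X] [NormedSpace ℂ X]
  {T : X →L[ℂ] X} {Res : ℂ → X →L[ℂ] X} {z₀ : ℂ} {ρ : ℝ}

noncomputable def reducedResolvent (Res : ℂ → X →L[ℂ] X) (z₀ : ℂ) (ρ : ℝ) : X →L[ℂ] X :=
  (2 * π * I)⁻¹ • ∮ ζ in C(z₀, ρ), (ζ - z₀)⁻¹ • Res ζ

theorem resolvent_apply_of_apply_eq_smul {ζ : ℂ} {χ : X} (hRes : Res ζ * (T - ζ • 1) = 1)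
    (hTχ : T χ = z₀ • χ) (hζ : ζ ≠ z₀) : Res ζ χ = (z₀ - ζ)⁻¹ • χ := by
  have h : (T - ζ • 1) ((z₀ - ζ)⁻¹ • χ) = χ := by
    rw [map_smul, sub_apply, smul_apply, one_apply_eq_self, hTχ, ← sub_smul, smul_smul,
      inv_mul_cancel₀ (sub_ne_zero.2 hζ.symm), one_smul]
  calc Res ζ χ = (Res ζ * (T - ζ • 1)) ((z₀ - ζ)⁻¹ • χ) := by rw [mul_apply_eq_comp, h]
    _ = (z₀ - ζ)⁻¹ • χ := by rw [hRes, one_apply_eq_self]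

theorem sub_smul_one_eq_add (ζ : ℂ) : T - z₀ • (1 : X →L[ℂ] X) = (T - ζ • 1) + (ζ - z₀) • 1 := by
  rw [sub_smul]; abel

variable [CompleteSpace X]

theorem continuousOn_of_resolvent {s : Set ℂ}
    (hRes : ∀ ζ ∈ s, (T - ζ • 1) * Res ζ = 1 ∧ Res ζ * (T - ζ • 1) = 1) :
    ContinuousOn Res s := by
  have hunit (ζ : ℂ) (hζ : ζ ∈ s) :
      ∃ u : (X →L[ℂ] X)ˣ, (u : X →L[ℂ] X) = T - ζ • 1 ∧ ↑u⁻¹ = Res ζ :=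
    ⟨⟨_, _, (hRes ζ hζ).1, (hRes ζ hζ).2⟩, rfl, rfl⟩
  refine ContinuousOn.congr (f := fun ζ => Ring.inverse (T - ζ • 1)) (fun ζ hζ => ?_)
    (fun ζ hζ => ?_)
  · obtain ⟨u, hu, -⟩ := hunit ζ hζ
    have hinv := NormedRing.inverse_continuousAt u
    rw [hu] at hinv
    exact (hinv.comp (f := fun ζ : ℂ => T - ζ • 1) (by fun_prop)).continuousWithinAt
  · obtain ⟨u, hu, hu'⟩ := hunit ζ hζ
    simp only [← hu, Ring.inverse_unit, hu']

variable (hρ : 0 < ρ) (hRes : ∀ ζ ∈ sphere z₀ ρ, (T - ζ • 1) * Res ζ = 1 ∧ Res ζ * (T - ζ • 1) = 1)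
include hρ hRes

theorem circleIntegral_sub_inv_smul_one_add_resolvent :
    (∮ ζ in C(z₀, ρ), ((ζ - z₀)⁻¹ • (1 : X →L[ℂ] X) + Res ζ)) =
      (2 * π * I : ℂ) • (1 - rieszE Res z₀ ρ) := by
  have hinv : CircleIntegrable (fun ζ => (ζ - z₀)⁻¹ • (1 : X →L[ℂ] X)) z₀ ρ :=
    ((continuousOn_sub_inv_sphere hρ.ne').smul continuousOn_const).circleIntegrable hρ.le
  rw [circleIntegral.integral_add hinv
    ((continuousOn_of_resolvent hRes).circleIntegrable hρ.le), circleIntegral.integral_smul_const,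
    circleIntegral.integral_sub_center_inv z₀ hρ.ne', rieszE, smul_sub, smul_neg,
    smul_inv_smul₀ two_pi_I_ne_zero, sub_neg_eq_add]

theorem map_reducedResolvent (L : (X →L[ℂ] X) →L[ℂ] X →L[ℂ] X)
    (hL : ∀ ζ ∈ sphere z₀ ρ, L (Res ζ) = 1 + (ζ - z₀) • Res ζ) :
    L (reducedResolvent Res z₀ ρ) = 1 - rieszE Res z₀ ρ := by
  have hint : CircleIntegrable (fun ζ => (ζ - z₀)⁻¹ • Res ζ) z₀ ρ :=
    ((continuousOn_sub_inv_sphere hρ.ne').smul (continuousOn_of_resolvent hRes)).circleIntegrable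
      hρ.le
  have hcongr : Set.EqOn (fun ζ => L ((ζ - z₀)⁻¹ • Res ζ))
      (fun ζ => (ζ - z₀)⁻¹ • (1 : X →L[ℂ] X) + Res ζ) (sphere z₀ ρ) := fun ζ hζ => by
    simp only [map_smul, hL ζ hζ, smul_add, smul_smul,
      inv_mul_cancel₀ (sub_ne_zero.2 (ne_of_mem_sphere hζ hρ.ne')), one_smul]
  rw [reducedResolvent, map_smul, ← L.circleIntegral_comp_comm hint,
    circleIntegral.integral_congr hρ.le hcongr,
    circleIntegral_sub_inv_smul_one_add_resolvent hρ hRes, inv_smul_smul₀ two_pi_I_ne_zero]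

theorem sub_smul_one_mul_reducedResolvent :
    (T - z₀ • 1) * reducedResolvent Res z₀ ρ = 1 - rieszE Res z₀ ρ :=
  map_reducedResolvent hρ hRes (.mul ℂ _ (T - z₀ • 1)) fun ζ hζ => by
    rw [mul_apply', sub_smul_one_eq_add ζ, add_mul, (hRes ζ hζ).1, smul_one_mul]

theorem reducedResolvent_mul_sub_smul_one :
    reducedResolvent Res z₀ ρ * (T - z₀ • 1) = 1 - rieszE Res z₀ ρ :=
  map_reducedResolvent hρ hRes ((ContinuousLinearMap.mul ℂ _).flip (T - z₀ • 1)) fun ζ hζ => by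
    rw [flip_apply, mul_apply', sub_smul_one_eq_add ζ, mul_add, (hRes ζ hζ).2, mul_smul_one]

theorem reducedResolvent_apply_eq_zero {χ : X} (hTχ : T χ = z₀ • χ) :
    reducedResolvent Res z₀ ρ χ = 0 := by
  have hint : CircleIntegrable (fun ζ => (ζ - z₀)⁻¹ • Res ζ) z₀ ρ :=
    ((continuousOn_sub_inv_sphere hρ.ne').smul (continuousOn_of_resolvent hRes)).circleIntegrable
      hρ.le
  have hcongr : Set.EqOn (fun ζ => ((ζ - z₀)⁻¹ • Res ζ) χ)
      (fun ζ => (-1 * (ζ - z₀) ^ (-2 : ℤ)) • χ) (sphere z₀ ρ) := fun ζ hζ => by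
    have hζ' := ne_of_mem_sphere hζ hρ.ne'
    simp only [smul_apply, resolvent_apply_of_apply_eq_smul (hRes ζ hζ).2 hTχ hζ', smul_smul]
    rw [zpow_neg, zpow_two, mul_inv, ← neg_sub ζ z₀, inv_neg]
    congr 1
    ring
  have hcomm := (ContinuousLinearMap.apply ℂ X χ).circleIntegral_comp_comm hint
  simp only [apply_apply] at hcomm
  rw [reducedResolvent, smul_apply, ← hcomm, circleIntegral.integral_congr hρ.le hcongr,
    circleIntegral.integral_smul_const, circleIntegral.integral_const_mul,
    circleIntegral.integral_sub_zpow_of_ne (by decide), mul_zero, zero_smul, smul_zero]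

end ReducedResolvent

section RankOneProjection

variable {H : Type*} [NormedAddCommGroup H] [InnerProductSpace ℂ H] {χ : H}

noncomputable def rankOneProj (χ : H) : H →L[ℂ] H := (innerSL ℂ χ).smulRight χ

@[simp]
theorem rankOneProj_apply (x : H) : rankOneProj χ x = ⟪χ, x⟫_ℂ • χ := by
  simp [rankOneProj]

theorem eq_zero_iff_one_sub_rankOneProj_apply_eq_zero_and_inner (y : H) :
    y = 0 ↔ (1 - rankOneProj χ) y = 0 ∧ ⟪χ, y⟫_ℂ = 0 := by
  refine ⟨fun h => by simp [h], fun ⟨hQ, hP⟩ => ?_⟩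
  simpa [hP, sub_eq_zero] using hQ

variable (hχ : ‖χ‖ = 1)
include hχ

theorem inner_rankOneProj_apply (x : H) : ⟪χ, rankOneProj χ x⟫_ℂ = ⟪χ, x⟫_ℂ := by
  simp [hχ]

theorem rankOneProj_apply_self : rankOneProj χ χ = χ := by
  simp [hχ]

theorem isIdempotentElem_rankOneProj : IsIdempotentElem (rankOneProj χ) := by
  ext x
  simp [hχ]

theorem inner_one_sub_rankOneProj_apply (x : H) : ⟪χ, (1 - rankOneProj χ) x⟫_ℂ = 0 := by
  simp [hχ]

theorem rankOneProj_one_sub_rankOneProj_apply (y : H) :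
    rankOneProj χ ((1 - rankOneProj χ) y) = 0 := by
  rw [rankOneProj_apply, inner_one_sub_rankOneProj_apply hχ, zero_smul]

theorem one_sub_rankOneProj_mul_eq_zero {A : H →L[ℂ] H}
    (hA : LinearMap.range (A : H →ₗ[ℂ] H) ≤ Submodule.span ℂ {χ}) :
    (1 - rankOneProj χ) * A = 0 := by
  ext x
  obtain ⟨c, hc⟩ := Submodule.mem_span_singleton.mp (hA ⟨x, rfl⟩)
  have hAx : A x = c • χ := hc.symm
  simp [hAx, hχ]

end RankOneProjection

section SchurComplement

variable {H : Type*} [NormedAddCommGroup H] [InnerProductSpace ℂ H] {χ : H}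

/-- `QBQ` always kills `χ`; adding `P` makes it invertible exactly when `QBQ` is invertible on
`χ^⊥`. -/
noncomputable def compressAddProj (χ : H) (B : H →L[ℂ] H) : H →L[ℂ] H :=
  (1 - rankOneProj χ) * B * (1 - rankOneProj χ) + rankOneProj χ

noncomputable def schurVector (χ : H) (B : H →L[ℂ] H) : H :=
  χ - Ring.inverse (compressAddProj χ B) ((1 - rankOneProj χ) (B χ))

noncomputable def schurComplement (χ : H) (B : H →L[ℂ] H) : ℂ :=
  ⟪χ, B (schurVector χ B)⟫_ℂ

theorem schurComplement_eq_zero_of_apply_eq_zero {B : H →L[ℂ] H} (hBχ : B χ = 0) :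
    schurComplement χ B = 0 := by
  simp [schurComplement, schurVector, hBχ]

theorem compressAddProj_apply_of_rankOneProj_apply_eq_zero {B : H →L[ℂ] H} {u : H}
    (hu : rankOneProj χ u = 0) : compressAddProj χ B u = (1 - rankOneProj χ) (B u) := by
  simp only [compressAddProj, add_apply, mul_apply_eq_comp, sub_apply, one_apply_eq_self, hu,
    sub_zero, add_zero]

variable (hχ : ‖χ‖ = 1)
include hχ

theorem rankOneProj_mul_compressAddProj (B : H →L[ℂ] H) :
    rankOneProj χ * compressAddProj χ B = rankOneProj χ := by
  have hPQ : rankOneProj χ * (1 - rankOneProj χ) = 0 := by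
    rw [mul_sub, mul_one, (isIdempotentElem_rankOneProj hχ).eq, sub_self]
  rw [compressAddProj, mul_add, ← mul_assoc, ← mul_assoc, hPQ, zero_mul, zero_mul, zero_add,
    (isIdempotentElem_rankOneProj hχ).eq]

variable {B : H →L[ℂ] H} (hB : IsUnit (compressAddProj χ B))
include hB

theorem rankOneProj_inverse_compressAddProj_apply (y : H) :
    rankOneProj χ (Ring.inverse (compressAddProj χ B) y) = rankOneProj χ y := by
  calc rankOneProj χ (Ring.inverse (compressAddProj χ B) y)
      = (rankOneProj χ * compressAddProj χ B * Ring.inverse (compressAddProj χ B)) y := by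
        rw [rankOneProj_mul_compressAddProj hχ]; rfl
    _ = rankOneProj χ y := by rw [mul_assoc, Ring.mul_inverse_cancel _ hB, mul_one]

theorem rankOneProj_schurVector : rankOneProj χ (schurVector χ B) = χ := by
  rw [schurVector, map_sub, rankOneProj_inverse_compressAddProj_apply hχ hB,
    rankOneProj_one_sub_rankOneProj_apply hχ, rankOneProj_apply_self hχ, sub_zero]

theorem one_sub_rankOneProj_apply_schurVector :
    (1 - rankOneProj χ) (B (schurVector χ B)) = 0 := by
  obtain ⟨ψ, hψ⟩ : ∃ ψ, ψ = Ring.inverse (compressAddProj χ B) ((1 - rankOneProj χ) (B χ)) :=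
    ⟨_, rfl⟩
  have hPψ : rankOneProj χ ψ = 0 := by
    rw [hψ, rankOneProj_inverse_compressAddProj_apply hχ hB,
      rankOneProj_one_sub_rankOneProj_apply hχ]
  have hMψ : compressAddProj χ B ψ = (1 - rankOneProj χ) (B χ) := by
    rw [hψ, ← mul_apply_eq_comp, Ring.mul_inverse_cancel _ hB, one_apply_eq_self]
  rw [schurVector, ← hψ, map_sub, map_sub, ← compressAddProj_apply_of_rankOneProj_apply_eq_zero hPψ,
    hMψ, sub_self]

theorem one_sub_rankOneProj_apply_eq_zero_iff (φ : H) :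
    (1 - rankOneProj χ) (B φ) = 0 ↔ φ = ⟪χ, φ⟫_ℂ • schurVector χ B := by
  refine ⟨fun hφ => ?_, fun hφ => ?_⟩
  · set w := φ - ⟪χ, φ⟫_ℂ • schurVector χ B
    have hPw : rankOneProj χ w = 0 := by
      rw [map_sub, map_smul, rankOneProj_schurVector hχ hB, rankOneProj_apply, sub_self]
    have hMw : compressAddProj χ B w = 0 := by
      rw [compressAddProj_apply_of_rankOneProj_apply_eq_zero hPw, map_sub, map_sub, hφ,
        map_smul, map_smul, one_sub_rankOneProj_apply_schurVector hχ hB, smul_zero, sub_zero]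
    have hw : w = 0 :=
      calc w = (Ring.inverse (compressAddProj χ B) * compressAddProj χ B) w := by
            rw [Ring.inverse_mul_cancel _ hB, one_apply_eq_self]
        _ = 0 := by rw [mul_apply_eq_comp, hMw, map_zero]
    exact sub_eq_zero.mp hw
  · rw [hφ, map_smul, map_smul, one_sub_rankOneProj_apply_schurVector hχ hB, smul_zero]

theorem exists_ne_zero_add_smul_rankOneProj_apply_eq_zero_iff (σ : ℂ) :
    (∃ φ : H, φ ≠ 0 ∧ (B + σ • rankOneProj χ) φ = 0) ↔ σ = -schurComplement χ B := by
  have hsplit (φ : H) : (B + σ • rankOneProj χ) φ = 0 ↔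
      (1 - rankOneProj χ) (B φ) = 0 ∧ ⟪χ, B φ⟫_ℂ + σ * ⟪χ, φ⟫_ℂ = 0 := by
    have hQ : (1 - rankOneProj χ) ((B + σ • rankOneProj χ) φ) = (1 - rankOneProj χ) (B φ) := by
      simp only [add_apply, smul_apply, sub_apply, one_apply_eq_self, rankOneProj_apply,
        inner_add_right, inner_smul_right, inner_self_eq_one_of_norm_eq_one hχ]
      module
    have hI : ⟪χ, (B + σ • rankOneProj χ) φ⟫_ℂ = ⟪χ, B φ⟫_ℂ + σ * ⟪χ, φ⟫_ℂ := by
      simp [hχ]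
    rw [eq_zero_iff_one_sub_rankOneProj_apply_eq_zero_and_inner (χ := χ), hQ, hI]
  have hinner : ⟪χ, schurVector χ B⟫_ℂ = 1 := by
    rw [← inner_rankOneProj_apply hχ, rankOneProj_schurVector hχ hB,
      inner_self_eq_one_of_norm_eq_one hχ]
  simp_rw [hsplit, one_sub_rankOneProj_apply_eq_zero_iff hχ hB]
  constructor
  · rintro ⟨φ, hφ0, hφ, hσ⟩
    have ha : ⟪χ, φ⟫_ℂ ≠ 0 := fun ha => hφ0 (by rw [hφ, ha, zero_smul])
    rw [hφ, map_smul] at hσ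
    simp only [inner_smul_right, hinner] at hσ
    exact mul_left_cancel₀ ha (by rw [schurComplement]; linear_combination hσ)
  · intro hσ
    refine ⟨schurVector χ B, fun h => ?_, by rw [hinner, one_smul], ?_⟩
    · have hP := rankOneProj_schurVector hχ hB
      rw [h, map_zero] at hP
      simp [← hP] at hχ
    · rw [hinner, hσ, schurComplement]; ring

end SchurComplement

section LocalGraph

variable {H : Type*} [NormedAddCommGroup H] [InnerProductSpace ℂ H] [CompleteSpace H] {χ : H}

theorem isUnit_compressAddProj_sub_smul_one {T : H →L[ℂ] H} {Res : ℂ → H →L[ℂ] H} {z₀ : ℂ}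
    {ρ : ℝ} (hρ : 0 < ρ)
    (hRes : ∀ ζ ∈ sphere z₀ ρ, (T - ζ • 1) * Res ζ = 1 ∧ Res ζ * (T - ζ • 1) = 1)
    (hχ : ‖χ‖ = 1) (hTχ : T χ = z₀ • χ)
    (hE : LinearMap.range (rieszE Res z₀ ρ : H →ₗ[ℂ] H) ≤ Submodule.span ℂ {χ}) :
    IsUnit (compressAddProj χ (T - z₀ • 1)) := by
  have hQE := one_sub_rankOneProj_mul_eq_zero hχ hE
  refine isUnit_mul_mul_add_of_isIdempotentElem (d := reducedResolvent Res z₀ ρ)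
    (isIdempotentElem_rankOneProj hχ) ?_ ?_ ?_ ?_
  · ext x; simp [hTχ]
  · ext x; simp [reducedResolvent_apply_eq_zero hρ hRes hTχ]
  · rw [sub_smul_one_mul_reducedResolvent hρ hRes, mul_sub, hQE, mul_one, sub_zero]
  · rw [reducedResolvent_mul_sub_smul_one hρ hRes, mul_sub, hQE, mul_one, sub_zero]

theorem differentiableAt_schurComplement {B : ℂ → H →L[ℂ] H} {v : ℂ}
    (hB : DifferentiableAt ℂ B v) (hM : IsUnit (compressAddProj χ (B v))) :
    DifferentiableAt ℂ (fun v => schurComplement χ (B v)) v := by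
  have hR : DifferentiableAt ℂ (fun v => Ring.inverse (compressAddProj χ (B v))) v :=
    DifferentiableAt.inverse (by unfold compressAddProj; fun_prop) hM
  have hvec : DifferentiableAt ℂ (fun v => B v (schurVector χ (B v))) v := by
    unfold schurVector; fun_prop
  exact (innerSL ℂ χ).differentiableAt.comp v hvec

theorem exists_differentiableOn_graph_of_isUnit_compressAddProj (hχ : ‖χ‖ = 1)
    {S : H →L[ℂ] H} (W : H →L[ℂ] H) (hSχ : S χ = 0) (hS : IsUnit (compressAddProj χ S)) :
    ∃ ε δ : ℝ, 0 < ε ∧ 0 < δ ∧ ∃ s : ℂ → ℂ, DifferentiableOn ℂ s (ball 0 ε) ∧ s 0 = 0 ∧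
      (∀ v : ℂ, ‖v‖ < ε → ‖s v‖ < δ) ∧ ∀ v σ : ℂ, ‖v‖ < ε →
        ((∃ φ : H, φ ≠ 0 ∧ (S + v • W + σ • rankOneProj χ) φ = 0) ↔ σ = s v) := by
  have hcont : Continuous fun v : ℂ => compressAddProj χ (S + v • W) := by
    unfold compressAddProj; fun_prop
  have h0 : (0 : ℂ) ∈ (fun v : ℂ => compressAddProj χ (S + v • W)) ⁻¹' {x | IsUnit x} := by
    simpa using hS
  obtain ⟨ε₁, hε₁, hunit⟩ := Metric.isOpen_iff.mp (Units.isOpen.preimage hcont) 0 h0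
  set s : ℂ → ℂ := fun v => -schurComplement χ (S + v • W)
  have hs : DifferentiableOn ℂ s (ball 0 ε₁) := fun v hv =>
    (differentiableAt_schurComplement (B := fun v => S + v • W) (by fun_prop)
      (hunit hv)).neg.differentiableWithinAt
  have hs0 : s 0 = 0 := by simp [s, schurComplement_eq_zero_of_apply_eq_zero hSχ]
  obtain ⟨ε₂, hε₂, hsmall⟩ := Metric.continuousAt_iff.mp
    (hs.continuousOn.continuousAt (ball_mem_nhds 0 hε₁)) 1 one_pos
  refine ⟨min ε₁ ε₂, 1, lt_min hε₁ hε₂, one_pos, s,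
    hs.mono (ball_subset_ball (min_le_left _ _)), hs0, fun v hv => ?_, fun v σ hv => ?_⟩
  · simpa [hs0] using hsmall (show dist v 0 < ε₂ by simpa using hv.trans_le (min_le_right _ _))
  · exact exists_ne_zero_add_smul_rankOneProj_apply_eq_zero_iff hχ
      (hunit (show v ∈ ball 0 ε₁ by simpa using hv.trans_le (min_le_left _ _))) σ

end LocalGraph

theorem resonance_set_intersection_is_analytic_curve_general
    {H : Type*} [NormedAddCommGroup H] [InnerProductSpace ℂ H] [CompleteSpace H]
    (N₀ W : H →L[ℂ] H)
    (z₀ : ℂ)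
    (ρ₀ : ℝ) (hρ₀ : 0 < ρ₀)
    (Res : ℂ → (H →L[ℂ] H))
    (hRes : ∀ ζ : ℂ, 0 < ‖ζ - z₀‖ → ‖ζ - z₀‖ ≤ ρ₀ →
      (N₀ - ζ • (1 : H →L[ℂ] H)) * Res ζ = 1 ∧ Res ζ * (N₀ - ζ • (1 : H →L[ℂ] H)) = 1)
    -- `z₀` is a simple eigenvalue: the Riesz projection has range `ℂ·χ`
    (χ : H) (hχnorm : ‖χ‖ = 1) (hχ : N₀ χ = z₀ • χ)
    (hrankone : LinearMap.range (rieszE Res z₀ ρ₀ : H →ₗ[ℂ] H) = Submodule.span ℂ {χ}) :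
    ∃ ε δ : ℝ, 0 < ε ∧ 0 < δ ∧
      ∃ s : ℂ → ℂ, DifferentiableOn ℂ s (Metric.ball (0 : ℂ) ε) ∧ s 0 = 0 ∧
        (∀ v : ℂ, ‖v‖ < ε → ‖s v‖ < δ) ∧
        ∀ v σ : ℂ, ‖v‖ < ε → ‖σ‖ < δ →
          ((∃ φ : H, φ ≠ 0 ∧
              (N₀ + v • W + σ • ((innerSL ℂ χ).smulRight χ)) φ = z₀ • φ) ↔ σ = s v) := by
  have hResSphere : ∀ ζ ∈ sphere z₀ ρ₀,
      (N₀ - ζ • 1) * Res ζ = 1 ∧ Res ζ * (N₀ - ζ • 1) = 1 := fun ζ hζ => by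
    rw [mem_sphere_iff_norm] at hζ
    exact hRes ζ (hζ ▸ hρ₀) hζ.le
  have hSχ : (N₀ - z₀ • 1) χ = 0 := by simp [hχ]
  obtain ⟨ε, δ, hε, hδ, s, hs, hs0, hsδ, hgraph⟩ :=
    exists_differentiableOn_graph_of_isUnit_compressAddProj hχnorm W hSχ
      (isUnit_compressAddProj_sub_smul_one hρ₀ hResSphere hχnorm hχ hrankone.le)
  refine ⟨ε, δ, hε, hδ, s, hs, hs0, hsδ, fun v σ hv _ => ?_⟩
  have hshift (φ : H) : (N₀ - z₀ • 1 + v • W + σ • rankOneProj χ) φ =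
      (N₀ + v • W + σ • rankOneProj χ) φ - z₀ • φ := by
    simp only [add_apply, sub_apply, smul_apply, one_apply_eq_self]
    abel
  simp_rw [← hgraph v σ hv, hshift, sub_eq_zero]
  rfl

/-- near a simple eigenvalue `z₀` of `N₀`, the intersection of the affine
plane `N₀ + ℂW + ℂW₀` with the resonance set is the graph of a single holomorphic
function `s`. -/
theorem resonance_set_intersection_is_analytic_curve
    {H : Type*} [NormedAddCommGroup H] [InnerProductSpace ℂ H] [CompleteSpace H]
    (A₀ C N₀ W : H →L[ℂ] H)
    (hA₀ : IsSelfAdjoint A₀) (hC : IsCompactOperator ⇑C) (hN₀ : N₀ = A₀ + C)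
    (hWsa : IsSelfAdjoint W) (hWcpt : IsCompactOperator ⇑W)
    (z₀ : ℂ) (hz₀ : z₀ ∈ spectrum ℂ N₀)
    (ρ₀ : ℝ) (hρ₀ : 0 < ρ₀)
    (hiso : ∀ ζ : ℂ, 0 < ‖ζ - z₀‖ → ‖ζ - z₀‖ ≤ ρ₀ → ζ ∉ spectrum ℂ N₀)
    (Res : ℂ → (H →L[ℂ] H))
    (hRes : ∀ ζ : ℂ, 0 < ‖ζ - z₀‖ → ‖ζ - z₀‖ ≤ ρ₀ →
      (N₀ - ζ • (1 : H →L[ℂ] H)) * Res ζ = 1 ∧ Res ζ * (N₀ - ζ • (1 : H →L[ℂ] H)) = 1)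
    -- `z₀` is a simple eigenvalue: the Riesz projection has range `ℂ·χ`
    (χ : H) (hχnorm : ‖χ‖ = 1) (hχ : N₀ χ = z₀ • χ)
    (hrankone : LinearMap.range (rieszE Res z₀ ρ₀ : H →ₗ[ℂ] H) = Submodule.span ℂ {χ}) :
    ∃ ε δ : ℝ, 0 < ε ∧ 0 < δ ∧
      ∃ s : ℂ → ℂ, DifferentiableOn ℂ s (Metric.ball (0 : ℂ) ε) ∧ s 0 = 0 ∧
        (∀ v : ℂ, ‖v‖ < ε → ‖s v‖ < δ) ∧
        ∀ v σ : ℂ, ‖v‖ < ε → ‖σ‖ < δ →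
          ((∃ φ : H, φ ≠ 0 ∧
              (N₀ + v • W + σ • ((innerSL ℂ χ).smulRight χ)) φ = z₀ • φ) ↔ σ = s v) :=
  resonance_set_intersection_is_analytic_curve_general N₀ W z₀ ρ₀ hρ₀ Res hRes χ hχnorm hχ hrankone
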